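/- Let {v₀, v₁} be an orthonormal basis of ℂ² and let b, x ∈ {0,1}. Suppose the quantized basis of {v₀,v₁} equals b⊕1, i.e., max_{k∈{0,1}} |⟨v_k, H^{b⊕1}|0⟩⟩| ≥ max_{k∈{0,1}} |⟨v_k, H^{b}|0⟩⟩|. Then the bias of the outcome of measuring H^b|x⟩ in the basis {v₀,v₁} is at most 1/√2, i.e., | |⟨v₀, H^b|x⟩⟩|² − |⟨v₁, H^b|x⟩⟩|² | ≤ 1/√2. -/

import Mathlib

/-- The 2×2 Hadamard matrix `(1/√2)·[[1,1],[1,-1]]`. -/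
noncomputable def Hmat : Matrix (Fin 2) (Fin 2) ℂ :=
  ((1 / Real.sqrt 2 : ℝ) : ℂ) • !![1, 1; 1, -1]

/-- The standard basis vector `|x⟩` of ℂ². -/
def ket (x : Fin 2) : Fin 2 → ℂ := fun i => if i = x then 1 else 0

/-- The inner product `⟨v, ψ⟩` on ℂ² (conjugate-linear in the first argument). -/
noncomputable def dotc (v ψ : Fin 2 → ℂ) : ℂ :=
  star (v 0) * ψ 0 + star (v 1) * ψ 1

/-! Write `p, q` for the moduli of the amplitudes of `H^b|0⟩` in the basis `{v₀, v₁}` and `r, s`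
for those of `H^{b⊕1}|0⟩`; think of them as `(cos α, sin α)` and `(cos β, sin β)`. Since the two
states overlap with modulus `1/√2`, the triangle inequality gives `|cos (α + β)| ≤ 1/√2 ≤ cos (α - β)`,
i.e. `|cos 2α cos 2β| ≤ sin 2α sin 2β`. The quantization hypothesis says `|cos 2α| ≤ |cos 2β|`, so
`cos² 2α ≤ sin 2α sin 2β ≤ 1 - cos² 2α`, and the bias `|cos 2α|` is at most `1/√2`. For `x = 1` the
state `H^b|1⟩` is orthogonal to `H^b|0⟩` in `ℂ²`, so its bias is the negative of that of `H^b|0⟩`. -/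

open scoped InnerProductSpace ComplexConjugate

lemma abs_sq_sub_sq_eq_two_mul_max_sq_sub {p q : ℝ} (hp : 0 ≤ p) (hq : 0 ≤ q) :
    |p ^ 2 - q ^ 2| = 2 * max p q ^ 2 - (p ^ 2 + q ^ 2) := by
  rcases le_total q p with h | h
  · rw [max_eq_left h, abs_of_nonneg (by nlinarith)]; ring
  · rw [max_eq_right h, abs_of_nonpos (by nlinarith)]; ring

lemma abs_sq_sub_sq_le_of_max_le {p q r s : ℝ} (hp : 0 ≤ p) (hq : 0 ≤ q) (hr : 0 ≤ r)
    (hs : 0 ≤ s) (h : p ^ 2 + q ^ 2 = r ^ 2 + s ^ 2) (hmax : max p q ≤ max r s) :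
    |p ^ 2 - q ^ 2| ≤ |r ^ 2 - s ^ 2| := by
  rw [abs_sq_sub_sq_eq_two_mul_max_sq_sub hp hq, abs_sq_sub_sq_eq_two_mul_max_sq_sub hr hs, h]
  have : 0 ≤ max p q := le_max_of_le_left hp
  gcongr

lemma two_mul_sq_le_one_of_abs_mul_le_mul {x₀ y₀ x₁ y₁ : ℝ} (h₀ : x₀ ^ 2 + y₀ ^ 2 = 1)
    (h₁ : x₁ ^ 2 + y₁ ^ 2 = 1) (hxy : |x₀ * x₁| ≤ y₀ * y₁) (hx : |x₀| ≤ |x₁|) :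
    2 * x₀ ^ 2 ≤ 1 := by
  have hsq : x₀ ^ 2 ≤ |x₀ * x₁| := by
    rw [abs_mul, ← sq_abs]
    exact pow_two |x₀| ▸ mul_le_mul_of_nonneg_left hx (abs_nonneg x₀)
  -- `x₀² ≤ y₀ y₁ ≤ (y₀² + y₁²) / 2 = 1 - (x₀² + x₁²) / 2 ≤ 1 - x₀²`
  nlinarith [sq_nonneg (y₀ - y₁), sq_le_sq.mpr hx]

lemma two_mul_sq_sub_sq_sq_le_one {p q r s t : ℝ} (hp : 0 ≤ p) (hq : 0 ≤ q) (hr : 0 ≤ r)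
    (hs : 0 ≤ s) (hpq : p ^ 2 + q ^ 2 = 1) (hrs : r ^ 2 + s ^ 2 = 1)
    (hmax : max p q ≤ max r s) (ht : t ^ 2 = 1 / 2) (hminus : |p * r - q * s| ≤ t)
    (hplus : t ≤ p * r + q * s) :
    2 * (p ^ 2 - q ^ 2) ^ 2 ≤ 1 := by
  have ht₀ : 0 ≤ t := (abs_nonneg _).trans hminus
  have hminus' : (p * r - q * s) ^ 2 ≤ t ^ 2 := sq_le_sq.mpr (by rwa [abs_of_nonneg ht₀])
  have hplus' : t ^ 2 ≤ (p * r + q * s) ^ 2 := pow_le_pow_left₀ ht₀ hplus 2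
  refine two_mul_sq_le_one_of_abs_mul_le_mul (y₀ := 2 * p * q) (y₁ := 2 * r * s)
    (by linear_combination (p ^ 2 + q ^ 2 + 1) * hpq)
    (by linear_combination (r ^ 2 + s ^ 2 + 1) * hrs) (abs_le.mpr ⟨?_, ?_⟩)
    (abs_sq_sub_sq_le_of_max_le hp hq hr hs (hpq.trans hrs.symm) hmax)
  -- double-angle formulas: `2 (p r ± q s)² - 1 = (p² - q²)(r² - s²) ± 4 p q r s`
  · linear_combination 2 * hplus' - 2 * ht + (r ^ 2 + s ^ 2) * hpq + hrs
  · linear_combination 2 * hminus' + 2 * ht - (r ^ 2 + s ^ 2) * hpq - hrs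

section

variable {E : Type*} [NormedAddCommGroup E] [InnerProductSpace ℂ E]
  (e : OrthonormalBasis (Fin 2) ℂ E)

noncomputable def measurementBias (ψ : E) : ℝ := ‖⟪e 0, ψ⟫_ℂ‖ ^ 2 - ‖⟪e 1, ψ⟫_ℂ‖ ^ 2

lemma norm_inner_sq_add_norm_inner_sq (ψ : E) :
    ‖⟪e 0, ψ⟫_ℂ‖ ^ 2 + ‖⟪e 1, ψ⟫_ℂ‖ ^ 2 = ‖ψ‖ ^ 2 := by
  simpa [Fin.sum_univ_two] using e.sum_sq_norm_inner_right ψ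

lemma inner_eq_conj_mul_add_conj_mul (φ χ : E) :
    ⟪φ, χ⟫_ℂ = conj ⟪e 0, φ⟫_ℂ * ⟪e 0, χ⟫_ℂ + conj ⟪e 1, φ⟫_ℂ * ⟪e 1, χ⟫_ℂ := by
  simp [← e.sum_inner_mul_inner φ χ, Fin.sum_univ_two]

lemma abs_measurementBias_le {φ χ : E} (hφ : ‖φ‖ = 1) (hχ : ‖χ‖ = 1)
    (hφχ : ‖⟪φ, χ⟫_ℂ‖ = 1 / √2)
    (hmax : max ‖⟪e 0, φ⟫_ℂ‖ ‖⟪e 1, φ⟫_ℂ‖ ≤ max ‖⟪e 0, χ⟫_ℂ‖ ‖⟪e 1, χ⟫_ℂ‖) :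
    |measurementBias e φ| ≤ 1 / √2 := by
  have hsum := inner_eq_conj_mul_add_conj_mul e φ χ
  have hnorm (k : Fin 2) :
      ‖conj ⟪e k, φ⟫_ℂ * ⟪e k, χ⟫_ℂ‖ = ‖⟪e k, φ⟫_ℂ‖ * ‖⟪e k, χ⟫_ℂ‖ := by
    rw [norm_mul, Complex.norm_conj]
  have hminus := abs_norm_sub_norm_le (conj ⟪e 0, φ⟫_ℂ * ⟪e 0, χ⟫_ℂ)
    (-(conj ⟪e 1, φ⟫_ℂ * ⟪e 1, χ⟫_ℂ))
  have hplus := norm_add_le (conj ⟪e 0, φ⟫_ℂ * ⟪e 0, χ⟫_ℂ) (conj ⟪e 1, φ⟫_ℂ * ⟪e 1, χ⟫_ℂ)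
  rw [sub_neg_eq_add, norm_neg, ← hsum, hφχ, hnorm, hnorm] at hminus
  rw [← hsum, hφχ, hnorm, hnorm] at hplus
  have hbias := two_mul_sq_sub_sq_sq_le_one (norm_nonneg _) (norm_nonneg _) (norm_nonneg _)
    (norm_nonneg _) (by rw [norm_inner_sq_add_norm_inner_sq, hφ, one_pow])
    (by rw [norm_inner_sq_add_norm_inner_sq, hχ, one_pow]) hmax
    (by rw [div_pow, Real.sq_sqrt zero_le_two, one_pow]) hminus hplus
  rw [one_div, ← Real.sqrt_inv]
  exact Real.abs_le_sqrt (by unfold measurementBias; linarith)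

lemma measurementBias_eq_neg_of_inner_eq_zero {φ ψ : E} (hφ : ‖φ‖ = 1) (hψ : ‖ψ‖ = 1)
    (hφψ : ⟪φ, ψ⟫_ℂ = 0) : measurementBias e ψ = -measurementBias e φ := by
  have hφ' := norm_inner_sq_add_norm_inner_sq e φ
  have hψ' := norm_inner_sq_add_norm_inner_sq e ψ
  rw [hφ, one_pow] at hφ'
  rw [hψ, one_pow] at hψ'
  have hbal : ‖⟪e 0, φ⟫_ℂ‖ * ‖⟪e 0, ψ⟫_ℂ‖ = ‖⟪e 1, φ⟫_ℂ‖ * ‖⟪e 1, ψ⟫_ℂ‖ := by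
    rw [inner_eq_conj_mul_add_conj_mul e, add_eq_zero_iff_eq_neg] at hφψ
    simpa only [norm_neg, norm_mul, Complex.norm_conj] using congrArg norm hφψ
  have : ‖⟪e 0, ψ⟫_ℂ‖ ^ 2 = ‖⟪e 1, φ⟫_ℂ‖ ^ 2 := by
    nlinarith [congrArg (· ^ 2) hbal]
  unfold measurementBias
  linarith

end

lemma dotc_eq_inner (u w : Fin 2 → ℂ) :
    dotc u w = ⟪WithLp.toLp 2 u, WithLp.toLp 2 w⟫_ℂ := by
  simp [dotc, PiLp.inner_apply, Fin.sum_univ_two, mul_comm]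

lemma exists_orthonormalBasis_of_dotc (v : Fin 2 → Fin 2 → ℂ)
    (hnorm : ∀ k, dotc (v k) (v k) = 1) (horth : dotc (v 0) (v 1) = 0) :
    ∃ e : OrthonormalBasis (Fin 2) ℂ (EuclideanSpace ℂ (Fin 2)),
      ∀ k, e k = WithLp.toLp 2 (v k) := by
  have hon : Orthonormal ℂ fun k => WithLp.toLp 2 (v k) := by
    rw [orthonormal_iff_ite]
    intro i j
    simp only [← dotc_eq_inner]
    fin_cases i <;> fin_cases j
    · exact hnorm 0
    · exact horth
    · simpa [dotc, mul_comm] using congrArg star horth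
    · exact hnorm 1
  refine ⟨.mk hon (hon.linearIndependent.span_eq_top_of_card_eq_finrank' ?_).ge, fun k => ?_⟩
  · simp
  · simp

lemma dotc_Hmat_pow_mulVec_ket (b i j : Fin 2) :
    dotc ((Hmat ^ (b : ℕ)).mulVec (ket i)) ((Hmat ^ (b : ℕ)).mulVec (ket j)) =
      if i = j then 1 else 0 := by
  have h : ((√2 : ℝ) : ℂ)⁻¹ * ((√2 : ℝ) : ℂ)⁻¹ = 2⁻¹ := by
    rw [← mul_inv, ← Complex.ofReal_mul, Real.mul_self_sqrt zero_le_two, Complex.ofReal_ofNat]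
  fin_cases b <;> fin_cases i <;> fin_cases j <;>
    simp [dotc, Hmat, ket, Matrix.mulVec, dotProduct, h] <;> norm_num

lemma dotc_Hmat_pow_mulVec_ket_zero_succ (b : Fin 2) :
    dotc ((Hmat ^ (b : ℕ)).mulVec (ket 0)) ((Hmat ^ ((b + 1 : Fin 2) : ℕ)).mulVec (ket 0)) =
      ((1 / √2 : ℝ) : ℂ) := by
  fin_cases b <;> simp [dotc, Hmat, ket, Matrix.mulVec, dotProduct]

lemma norm_toLp_Hmat_pow_mulVec_ket (b i : Fin 2) :
    ‖WithLp.toLp 2 ((Hmat ^ (b : ℕ)).mulVec (ket i))‖ = 1 := by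
  refine (pow_eq_one_iff_of_nonneg (norm_nonneg _) two_ne_zero).mp ?_
  rw [@norm_sq_eq_re_inner ℂ, ← dotc_eq_inner, dotc_Hmat_pow_mulVec_ket, if_pos rfl,
    RCLike.one_re]

/-- If the quantized basis of the orthonormal basis `{v 0, v 1}` of ℂ² equals `b ⊕ 1`,
i.e. `max_k |⟨v k, H^{b⊕1}|0⟩⟩| ≥ max_k |⟨v k, H^b|0⟩⟩|`, then the bias of the
outcome of measuring `H^b|x⟩` in `{v 0, v 1}` is at most `1/√2`. -/
theorem stmt11 (v : Fin 2 → Fin 2 → ℂ)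
    (hnorm : ∀ k, dotc (v k) (v k) = 1) (horth : dotc (v 0) (v 1) = 0)
    (b x : Fin 2)
    (hquant :
      max ‖dotc (v 0) ((Hmat ^ (b : ℕ)).mulVec (ket 0))‖
          ‖dotc (v 1) ((Hmat ^ (b : ℕ)).mulVec (ket 0))‖
        ≤ max ‖dotc (v 0) ((Hmat ^ ((b + 1 : Fin 2) : ℕ)).mulVec (ket 0))‖
            ‖dotc (v 1) ((Hmat ^ ((b + 1 : Fin 2) : ℕ)).mulVec (ket 0))‖) :
    |‖dotc (v 0) ((Hmat ^ (b : ℕ)).mulVec (ket x))‖ ^ 2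
        - ‖dotc (v 1) ((Hmat ^ (b : ℕ)).mulVec (ket x))‖ ^ 2|
      ≤ 1 / Real.sqrt 2 := by
  obtain ⟨e, he⟩ := exists_orthonormalBasis_of_dotc v hnorm horth
  simp only [dotc_eq_inner (v _), ← he] at hquant ⊢
  have hbias := abs_measurementBias_le e (norm_toLp_Hmat_pow_mulVec_ket b 0)
    (norm_toLp_Hmat_pow_mulVec_ket (b + 1) 0)
    (by rw [← dotc_eq_inner, dotc_Hmat_pow_mulVec_ket_zero_succ, Complex.norm_real,
      Real.norm_of_nonneg (by positivity)]) hquant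
  change |measurementBias e _| ≤ _
  obtain rfl | rfl : x = 0 ∨ x = 1 := by omega
  · exact hbias
  · rwa [measurementBias_eq_neg_of_inner_eq_zero e (norm_toLp_Hmat_pow_mulVec_ket b 0)
      (norm_toLp_Hmat_pow_mulVec_ket b 1)
      (by rw [← dotc_eq_inner, dotc_Hmat_pow_mulVec_ket, if_neg zero_ne_one]), abs_neg]
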